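/- arXiv:2502.17966 — 2 statements merged into one kernel-verified Lean document; each statement's English description precedes it below -/
import Mathlib

section
/- Define x_{n+1} = x_n + y_n, y_{n+1} = y_n + 3x_n with x_0 = y_0 = 1, and r_n = y_n/x_n. Then r_n converges to √3. -/
/-!
Writing `r = y n / x n`, one step of the recursion is the Möbius map `r ↦ (r + A) / (r + 1)`, and
`(r + A) / (r + 1) - √A = (1 - √A) / (r + 1) * (r - √A)`.
Since `r ≥ 0`, the error shrinks at least by the factor `|1 - √A|`, which is `< 1` for `0 < A < 4`.
-/

open Filter Topology

theorem Real.abs_div_add_one_sub_sqrt_le {A r : ℝ} (hA : 0 ≤ A) (hr : 0 ≤ r) :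
    |(r + A) / (r + 1) - √A| ≤ |1 - √A| * |r - √A| := by
  have hr1 : 0 < r + 1 := by linarith
  have hsq : √A ^ 2 = A := Real.sq_sqrt hA
  have key : (r + A) / (r + 1) - √A = (1 - √A) / (r + 1) * (r - √A) := by
    field_simp
    linear_combination -hsq
  rw [key, abs_mul, abs_div, abs_of_pos hr1]
  gcongr
  exact div_le_self (abs_nonneg _) (by linarith)

theorem tendsto_of_abs_sub_le_mul {u : ℕ → ℝ} {L c : ℝ} (hc0 : 0 ≤ c) (hc1 : c < 1)
    (h : ∀ n, |u (n + 1) - L| ≤ c * |u n - L|) : Tendsto u atTop (𝓝 L) := by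
  have hgeom : ∀ n, ‖u n - L‖ ≤ |u 0 - L| * c ^ n := fun n => by
    rw [mul_comm]
    exact le_geom (u := fun n => |u n - L|) hc0 n fun k _ => h k
  have hlim : Tendsto (fun n => |u 0 - L| * c ^ n) atTop (𝓝 0) := by
    simpa using (tendsto_pow_atTop_nhds_zero_of_lt_one hc0 hc1).const_mul |u 0 - L|
  exact tendsto_sub_nhds_zero_iff.mp (squeeze_zero_norm hgeom hlim)

section Theon

variable {A : ℕ} {x y : ℕ → ℕ} (hx : ∀ n, x (n + 1) = x n + y n)
  (hy : ∀ n, y (n + 1) = y n + A * x n)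
include hx

theorem theon_x_pos (hx0 : 0 < x 0) (n : ℕ) : 0 < x n := by
  induction n with
  | zero => exact hx0
  | succ n ih => rw [hx]; omega

include hy

theorem theon_ratio_succ {n : ℕ} (hxn : 0 < x n) :
    (y (n + 1) : ℝ) / x (n + 1) = ((y n / x n : ℝ) + A) / ((y n / x n : ℝ) + 1) := by
  have : (x n : ℝ) ≠ 0 := by positivity
  rw [hx, hy]
  push_cast
  field_simp
  ring

theorem tendsto_theon_ratio (hx0 : 0 < x 0) (hA0 : 0 < A) (hA4 : A < 4) :
    Tendsto (fun n => (y n : ℝ) / x n) atTop (𝓝 √A) := by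
  have hsqrt_pos : 0 < √(A : ℝ) := Real.sqrt_pos.mpr (by exact_mod_cast hA0)
  have hsqrt_lt : √(A : ℝ) < 2 := by
    rw [Real.sqrt_lt' two_pos]
    exact_mod_cast (by omega : A < 2 ^ 2)
  refine tendsto_of_abs_sub_le_mul (c := |1 - √(A : ℝ)|) (abs_nonneg _)
    (abs_sub_lt_iff.mpr ⟨by linarith, by linarith⟩) fun n => ?_
  rw [theon_ratio_succ hx hy (theon_x_pos hx hx0 n)]
  exact Real.abs_div_add_one_sub_sqrt_le (Nat.cast_nonneg A) (by positivity)

end Theon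

theorem theon_sqrt3_tendsto_general (x y : ℕ → ℕ) (hx0 : x 0 = 1)
    (hx : ∀ n, x (n + 1) = x n + y n) (hy : ∀ n, y (n + 1) = y n + 3 * x n) :
    Filter.Tendsto (fun n => (y n : ℝ) / (x n : ℝ)) Filter.atTop
      (nhds (Real.sqrt 3)) := by
  simpa using tendsto_theon_ratio (A := 3) hx hy (by omega) (by norm_num) (by norm_num)

theorem theon_sqrt3_tendsto (x y : ℕ → ℕ) (hx0 : x 0 = 1) (hy0 : y 0 = 1)
    (hx : ∀ n, x (n + 1) = x n + y n) (hy : ∀ n, y (n + 1) = y n + 3 * x n) :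
    Filter.Tendsto (fun n => (y n : ℝ) / (x n : ℝ)) Filter.atTop
      (nhds (Real.sqrt 3)) :=
  theon_sqrt3_tendsto_general x y hx0 hx hy
end

section
/- With r_0 = 1 and r_{n+1} = (r_n + 3)/(r_n + 1), for all n we have |r_n - √3| ≤ (1/2)^n * (√3 - 1). -/
/-!
The step `x ↦ (x + a) / (x + 1)` fixes `√a` and satisfies
`(x + a) / (x + 1) - √a = (1 - √a) (x - √a) / (x + 1)`. Every iterate of `1` is at least `1`, so
the error is multiplied at each step by at most `(√3 - 1) / 2 < 1 / 2`.
-/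

namespace Theon

noncomputable def step (a x : ℝ) : ℝ := (x + a) / (x + 1)

theorem one_le_step {a x : ℝ} (ha : 1 ≤ a) (hx : 1 ≤ x) : 1 ≤ step a x := by
  rw [step, le_div_iff₀ (by linarith)]
  linarith

theorem step_sub_sqrt {a x : ℝ} (ha : 0 ≤ a) (hx : x + 1 ≠ 0) :
    step a x - √a = (1 - √a) * (x - √a) / (x + 1) := by
  have hsq : √a ^ 2 = a := Real.sq_sqrt ha
  rw [step]
  field_simp
  linear_combination -hsq

theorem abs_step_sub_sqrt_le {a x : ℝ} (ha : 1 ≤ a) (hx : 1 ≤ x) :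
    |step a x - √a| ≤ (√a - 1) / 2 * |x - √a| := by
  have hsqrt : 1 ≤ √a := Real.one_le_sqrt.mpr ha
  have hpos : 0 < x + 1 := by linarith
  rw [step_sub_sqrt (by linarith) hpos.ne', abs_div, abs_mul, abs_of_pos hpos,
    abs_of_nonpos (by linarith : 1 - √a ≤ 0), neg_sub, mul_div_right_comm]
  gcongr
  linarith

end Theon

open Theon in
theorem theon_sqrt3_error_bound (r : ℕ → ℝ) (h0 : r 0 = 1)
    (hr : ∀ n, r (n + 1) = (r n + 3) / (r n + 1)) :
    ∀ n, |r n - Real.sqrt 3| ≤ (1 / 2 : ℝ) ^ n * (Real.sqrt 3 - 1) := by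
  have hstep (n : ℕ) : r (n + 1) = step 3 (r n) := hr n
  have hsqrt3 : √3 < 2 := by
    rw [Real.sqrt_lt' two_pos]
    norm_num
  have hge (n : ℕ) : 1 ≤ r n := by
    induction n with
    | zero => exact h0.ge
    | succ n ih => exact hstep n ▸ one_le_step (by norm_num) ih
  have hcontract (n : ℕ) : |r (n + 1) - √3| ≤ 1 / 2 * |r n - √3| := by
    rw [hstep]
    refine (abs_step_sub_sqrt_le (by norm_num) (hge n)).trans ?_
    gcongr
    linarith
  intro n
  calc |r n - √3| ≤ (1 / 2) ^ n * |r 0 - √3| :=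
        le_geom (u := fun n ↦ |r n - √3|) (by norm_num) n fun k _ ↦ hcontract k
    _ = (1 / 2) ^ n * (√3 - 1) := by
        rw [h0, abs_sub_comm, abs_of_nonneg (by simp [Real.le_sqrt])]
end
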